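/- For every nonnegative integer n, cφ₂(2n) ≡ p(n) (mod 4) and cφ₂(2n+1) ≡ 0 (mod 4), where p denotes the ordinary partition function. -/

import Mathlib

/-- `pk k n` is the `n`-th coefficient of `∏_{m ≥ 1} (1 - q^m)^{-k}` (the factors with
`m > n` do not affect the `n`-th coefficient, so a finite product suffices). -/
noncomputable def pk (k n : ℕ) : ℤ :=
  PowerSeries.coeff (R := ℤ) n
    (∏ m ∈ Finset.range (n + 1),
      ((1 - (PowerSeries.X : PowerSeries ℤ) ^ (m + 1)).invOfUnit 1) ^ k)

/-- The quadratic form `Q(m₁,…,m_{k-1}) = ∑ mᵢ² + ∑_{i<j} mᵢ mⱼ`. -/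
def Qform (k : ℕ) (m : Fin (k - 1) → ℤ) : ℤ :=
  (∑ i, (m i) ^ 2) + ∑ i, ∑ j ∈ Finset.univ.filter (fun j => i < j), m i * m j

/-- `rQ k j` is the number of `m ∈ ℤ^{k-1}` with `Q(m) = j`. -/
noncomputable def rQ (k j : ℕ) : ℕ :=
  {m : Fin (k - 1) → ℤ | Qform k m = (j : ℤ)}.ncard

/-- Andrews' generalized Frobenius partition function `cφ_k(n) = ∑_{j=0}^n r_Q(j) p_k(n-j)`. -/
noncomputable def cphi (k n : ℕ) : ℤ :=
  ∑ j ∈ Finset.range (n + 1), (rQ k j : ℤ) * pk k (n - j)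

/-!
The theta series is `θ = 1 + 2 ∑_{m ≥ 1} X^{m²}`. Since
`(1 - X^k)⁻¹ = (1 + X^k)(1 - X^{2k})⁻¹`, one gets
`(1 - X^k)⁻² = (1 - X^{2k})⁻¹ (1 + 2 X^k (1 - X^k)⁻¹)`, and a product of factors `1 + 2a`
is `1 + 2 ∑ a` modulo 4, so `(X; X)_∞⁻² ≡ (X²; X²)_∞⁻¹ (1 + 2 ∑_j d(j) X^j)`. As `d(j)` is
odd exactly when `j` is a square (pair `d` with `j / d`), the two factors `1 + 2(…)` cancel
modulo 4, leaving `θ (X; X)_∞⁻² ≡ (X²; X²)_∞⁻¹ = ∑ p(n) X^{2n}`. All products are truncated;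
the omitted factors are `≡ 1` modulo a power of `X` beyond the coefficient in question.
-/

open Finset

namespace PowerSeries

variable {R S : Type*} [CommRing R] [CommRing S]

variable (R) in
noncomputable def invOneSubXPow (k : ℕ) : R⟦X⟧ :=
  (1 - X ^ k : R⟦X⟧).invOfUnit 1

variable {k : ℕ}

theorem one_sub_X_pow_mul_invOneSubXPow (hk : k ≠ 0) :
    (1 - X ^ k) * invOneSubXPow R k = 1 :=
  mul_invOfUnit _ _ (by simp [zero_pow hk])

theorem eq_invOneSubXPow_of_mul_eq_one (hk : k ≠ 0) {f : R⟦X⟧} (h : (1 - X ^ k) * f = 1) :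
    f = invOneSubXPow R k :=
  left_inv_eq_right_inv (by rw [mul_comm, h]) (one_sub_X_pow_mul_invOneSubXPow hk)

theorem map_invOneSubXPow (φ : R →+* S) (hk : k ≠ 0) :
    map φ (invOneSubXPow R k) = invOneSubXPow S k :=
  eq_invOneSubXPow_of_mul_eq_one hk <| by
    simpa using congrArg (map φ) (one_sub_X_pow_mul_invOneSubXPow (R := R) hk)

theorem expand_invOneSubXPow (p : ℕ) (hp : p ≠ 0) (hk : k ≠ 0) :
    expand p hp (invOneSubXPow R k) = invOneSubXPow R (p * k) :=
  eq_invOneSubXPow_of_mul_eq_one (mul_ne_zero hp hk) <| by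
    simpa [pow_mul] using congrArg (expand p hp) (one_sub_X_pow_mul_invOneSubXPow (R := R) hk)

theorem coeff_invOneSubXPow (hk : k ≠ 0) (n : ℕ) :
    coeff n (invOneSubXPow R k) = if k ∣ n then 1 else 0 := by
  have h1 : mk 1 = invOneSubXPow R 1 :=
    eq_invOneSubXPow_of_mul_eq_one one_ne_zero <| by
      rw [pow_one, mul_comm, mk_one_mul_one_sub_eq_one]
  rw [← mul_one k, ← expand_invOneSubXPow k hk one_ne_zero, ← h1, coeff_expand, mul_one]
  simp

theorem X_pow_mul_invOneSubXPow (hk : k ≠ 0) :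
    X ^ k * invOneSubXPow R k = invOneSubXPow R k - 1 := by
  linear_combination -one_sub_X_pow_mul_invOneSubXPow (R := R) hk

theorem X_pow_dvd_invOneSubXPow_pow_sub_one {n : ℕ} (hk : k ≠ 0) (hnk : n ≤ k) (e : ℕ) :
    X ^ n ∣ invOneSubXPow R k ^ e - 1 := by
  have h : X ^ k ∣ invOneSubXPow R k - 1 := ⟨_, (X_pow_mul_invOneSubXPow hk).symm⟩
  exact (pow_dvd_pow X hnk).trans (h.trans (sub_one_dvd_pow_sub_one _ e))

theorem invOneSubXPow_sq (hk : k ≠ 0) :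
    invOneSubXPow R k ^ 2 =
      invOneSubXPow R (2 * k) * (1 + 2 * (X ^ k * invOneSubXPow R k)) := by
  have hfactor : invOneSubXPow R (2 * k) * (1 + X ^ k) = invOneSubXPow R k :=
    eq_invOneSubXPow_of_mul_eq_one hk <| by
      have h := one_sub_X_pow_mul_invOneSubXPow (R := R) (mul_ne_zero two_ne_zero hk)
      rw [pow_mul'] at h
      linear_combination h
  linear_combination (-invOneSubXPow R k) * hfactor +
    invOneSubXPow R (2 * k) * one_sub_X_pow_mul_invOneSubXPow (R := R) hk

theorem coeff_mul_of_X_pow_dvd_sub_one {n : ℕ} (f : R⟦X⟧) {g : R⟦X⟧}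
    (hg : X ^ (n + 1) ∣ g - 1) : coeff n (f * g) = coeff n f := by
  have h : coeff n (f * (g - 1)) = 0 :=
    X_pow_dvd_iff.mp (dvd_mul_of_dvd_right hg f) n n.lt_succ_self
  rwa [mul_sub, mul_one, map_sub, sub_eq_zero] at h

theorem coeff_prod_of_subset {ι : Type*} [DecidableEq ι] {s t : Finset ι} {f : ι → R⟦X⟧}
    {n : ℕ} (hst : s ⊆ t) (hf : ∀ i ∈ t \ s, X ^ (n + 1) ∣ f i - 1) :
    coeff n (∏ i ∈ t, f i) = coeff n (∏ i ∈ s, f i) := by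
  rw [← prod_sdiff hst, mul_comm]
  refine coeff_mul_of_X_pow_dvd_sub_one _ <|
    prod_induction f (fun g => X ^ (n + 1) ∣ g - 1) (fun a b ha hb => ?_) (by simp) hf
  have h : a * b - 1 = (a - 1) * b + (b - 1) := by ring
  exact h ▸ dvd_add (dvd_mul_of_dvd_left ha b) hb

open scoped WithPiTopology in
theorem coeff_eq_coeff_prod_range_of_hasProd [TopologicalSpace R] [DiscreteTopology R]
    {f : ℕ → R⟦X⟧} {a : R⟦X⟧} (hf : HasProd f a) {n B : ℕ}
    (hB : ∀ i, B ≤ i → X ^ (n + 1) ∣ f i - 1) :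
    coeff n a = coeff n (∏ i ∈ range B, f i) := by
  have h := ((WithPiTopology.tendsto_iff_coeff_tendsto R _ _ _).mp hf.tendsto_prod_nat) n
  rw [nhds_discrete, Filter.tendsto_pure, Filter.eventually_atTop] at h
  obtain ⟨N, hN⟩ := h
  rw [← hN (max N B) (le_max_left N B)]
  refine coeff_prod_of_subset (range_subset_range.mpr (le_max_right N B)) fun i hi => hB i ?_
  simp only [mem_sdiff, mem_range] at hi
  omega

open scoped WithPiTopology in
theorem coeff_prod_range_invOneSubXPow_eq_card_partition {n B : ℕ} (hn : n < B) :
    coeff n (∏ i ∈ range B, invOneSubXPow R (i + 1)) = Fintype.card n.Partition := by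
  let _ : TopologicalSpace R := ⊥
  have : DiscreteTopology R := ⟨rfl⟩
  have hterm (i : ℕ) :
      (if True then ∑' j, (X : R⟦X⟧) ^ ((i + 1) * j) else 1) = invOneSubXPow R (i + 1) := by
    refine eq_invOneSubXPow_of_mul_eq_one i.succ_ne_zero ?_
    simp_rw [if_true, pow_mul]
    rw [mul_comm]
    exact WithPiTopology.tsum_pow_mul_one_sub_of_constantCoeff_eq_zero (by simp)
  have h := Nat.Partition.hasProd_powerSeriesMk_card_restricted R (fun _ => True)
  simp_rw [hterm] at h
  rw [← coeff_eq_coeff_prod_range_of_hasProd h fun i hi => by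
    simpa using X_pow_dvd_invOneSubXPow_pow_sub_one (R := R) i.succ_ne_zero (by omega) 1]
  simp [Nat.Partition.restricted]

end PowerSeries

theorem Nat.card_divisors_filter_mul_self_eq {n : ℕ} (hn : n ≠ 0) :
    #{d ∈ n.divisors | d * d = n} = if IsSquare n then 1 else 0 := by
  split_ifs with hsq
  · obtain ⟨r, rfl⟩ := hsq
    rw [card_eq_one]
    refine ⟨r, eq_singleton_iff_unique_mem.mpr ⟨?_, fun d hd => ?_⟩⟩
    · exact mem_filter.mpr ⟨Nat.mem_divisors.mpr ⟨dvd_mul_right r r, hn⟩, rfl⟩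
    · exact Nat.mul_self_inj.mp (mem_filter.mp hd).2
  · rw [Finset.card_eq_zero, filter_eq_empty_iff]
    exact fun d _ hd => hsq ⟨d, hd.symm⟩

theorem Nat.even_card_divisors_filter_mul_self_ne {n : ℕ} (hn : n ≠ 0) :
    Even #{d ∈ n.divisors | d * d ≠ n} := by
  have hdiv {d : ℕ} (hd : d ∈ n.divisors) : d * (n / d) = n :=
    Nat.mul_div_cancel' (Nat.dvd_of_mem_divisors hd)
  rw [← ZMod.natCast_eq_zero_iff_even, card_eq_sum_ones, Nat.cast_sum, Nat.cast_one]
  refine sum_involution (fun d _ => n / d) (fun _ _ => by decide) ?_ ?_ ?_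
  · intro d hd _ hfix
    simp only [mem_filter] at hd
    exact hd.2 (by simpa [hfix] using hdiv hd.1)
  · intro d hd
    simp only [mem_filter] at hd ⊢
    refine ⟨Nat.mem_divisors.mpr ⟨Nat.div_dvd_of_dvd (Nat.dvd_of_mem_divisors hd.1), hn⟩,
      fun hsq => hd.2 ?_⟩
    have hne : n / d ≠ 0 := fun h => hn (by rw [← hdiv hd.1, h, mul_zero])
    have hfix : d = n / d := Nat.eq_of_mul_eq_mul_right (Nat.pos_of_ne_zero hne)
      ((hdiv hd.1).trans hsq.symm)
    nth_rewrite 2 [hfix]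
    exact hdiv hd.1
  · intro d hd
    exact Nat.div_div_self (Nat.dvd_of_mem_divisors (mem_filter.mp hd).1) hn

theorem Nat.even_card_divisors_add_ite {n : ℕ} (hn : n ≠ 0) :
    Even (#n.divisors + if IsSquare n then 1 else 0) := by
  have h := Nat.even_card_divisors_filter_mul_self_ne hn
  rw [← card_filter_add_card_filter_not (fun d => d * d = n),
    Nat.card_divisors_filter_mul_self_eq hn]
  split_ifs <;> simpa [Nat.even_add_one, parity_simps] using h

theorem Int.ncard_setOf_sq_eq (j : ℕ) :
    {y : ℤ | y ^ 2 = j}.ncard = if j = 0 then 1 else if IsSquare j then 2 else 0 := by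
  split_ifs with h0 hsq
  · simp [h0]
  · obtain ⟨r, rfl⟩ := hsq
    have hr : (r : ℤ) ≠ -(r : ℤ) := by
      have : r ≠ 0 := by rintro rfl; exact h0 rfl
      omega
    have : {y : ℤ | y ^ 2 = ((r * r : ℕ) : ℤ)} = {(r : ℤ), -(r : ℤ)} := by
      ext y
      simp [← sq, sq_eq_sq_iff_eq_or_eq_neg]
    rw [this, Set.ncard_pair hr]
  · have hempty : {y : ℤ | y ^ 2 = j} = ∅ :=
      Set.eq_empty_of_forall_notMem fun y hy => hsq ⟨y.natAbs, by
        zify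
        rw [← (hy : y ^ 2 = j), sq, ← abs_mul_abs_self y]⟩
    rw [hempty, Set.ncard_empty]

theorem rQ_two (j : ℕ) : rQ 2 j = if j = 0 then 1 else if IsSquare j then 2 else 0 := by
  rw [← Int.ncard_setOf_sq_eq, rQ, ← Set.ncard_preimage_of_injective_subset_range
    (Equiv.funUnique (Fin 1) ℤ).injective (by simp)]
  congr 1
  ext m
  simp [Qform, Finset.filter_singleton]

section

open PowerSeries

variable {R : Type*} [CommRing R]

theorem prod_one_add_two_mul_of_four_eq_zero {ι : Type*} (h4 : (4 : R) = 0) (s : Finset ι)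
    (a : ι → R) : ∏ i ∈ s, (1 + 2 * a i) = 1 + 2 * ∑ i ∈ s, a i := by
  classical
  induction s using Finset.induction_on with
  | empty => simp
  | insert i s hi ih =>
    rw [prod_insert hi, sum_insert hi, ih]
    linear_combination (a i * ∑ j ∈ s, a j) * h4

variable (R) in
noncomputable def squaresSeries : R⟦X⟧ :=
  mk fun j => if j ≠ 0 ∧ IsSquare j then 1 else 0

variable (R) in
noncomputable def divisorSeries (B : ℕ) : R⟦X⟧ :=
  ∑ k ∈ range B, X ^ (k + 1) * invOneSubXPow R (k + 1)

theorem mk_rQ_two : mk (fun j => (rQ 2 j : R)) = 1 + 2 * squaresSeries R := by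
  ext j
  rw [coeff_mk, rQ_two, ← map_ofNat C 2, map_add, coeff_C_mul, coeff_one, squaresSeries,
    coeff_mk]
  split_ifs <;> simp_all

theorem coeff_divisorSeries {j B : ℕ} (hjB : j ≤ B) :
    coeff j (divisorSeries R B) = #j.divisors := by
  have hterm (k : ℕ) : coeff j (X ^ (k + 1) * invOneSubXPow R (k + 1)) =
      if k + 1 ∈ j.divisors then 1 else 0 := by
    rw [X_pow_mul_invOneSubXPow k.succ_ne_zero, map_sub, coeff_invOneSubXPow k.succ_ne_zero,
      coeff_one]
    simp only [Nat.mem_divisors]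
    split_ifs <;> simp_all
  simp_rw [divisorSeries, map_sum, hterm, sum_boole]
  congr 1
  refine card_nbij' (· + 1) (· - 1) (fun k hk => (mem_filter.mp hk).2) (fun d hd => ?_)
    (fun k _ => by simp) (fun d hd => ?_)
  · have := Nat.divisor_le hd
    have := Nat.pos_of_mem_divisors hd
    simp only [coe_filter, mem_range]
    exact ⟨by omega, by rwa [Nat.sub_add_cancel (by omega)]⟩
  · have := Nat.pos_of_mem_divisors hd
    simp only
    omega

theorem X_pow_dvd_two_mul_squaresSeries_add_divisorSeries (h4 : (4 : R) = 0) (B : ℕ) :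
    X ^ (B + 1) ∣ 2 * (squaresSeries R + divisorSeries R B) := by
  refine X_pow_dvd_iff.mpr fun j hj => ?_
  rw [← map_ofNat C 2, coeff_C_mul, map_add, coeff_divisorSeries (by omega), squaresSeries,
    coeff_mk]
  obtain rfl | hj0 := eq_or_ne j 0
  · simp
  obtain ⟨c, hc⟩ := Nat.even_card_divisors_add_ite hj0
  have hcast : ((if j ≠ 0 ∧ IsSquare j then 1 else 0 : R) + #j.divisors) =
      ((#j.divisors + if IsSquare j then 1 else 0 : ℕ) : R) := by
    simp only [ne_eq, hj0, not_false_eq_true, true_and]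
    split_ifs <;> push_cast <;> ring
  rw [hcast, hc]
  push_cast
  linear_combination (c : R) * h4

theorem prod_range_invOneSubXPow_sq (B : ℕ) :
    ∏ i ∈ range B, invOneSubXPow R (i + 1) ^ 2 =
      expand 2 two_ne_zero (∏ i ∈ range B, invOneSubXPow R (i + 1)) *
        ∏ i ∈ range B, (1 + 2 * (X ^ (i + 1) * invOneSubXPow R (i + 1))) := by
  rw [map_prod, ← prod_mul_distrib]
  exact prod_congr rfl fun i _ => by
    rw [invOneSubXPow_sq i.succ_ne_zero, expand_invOneSubXPow 2 two_ne_zero i.succ_ne_zero]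

theorem pk_eq_coeff {k s B : ℕ} (hs : s < B) :
    (pk k s : R) = coeff s (∏ i ∈ range B, invOneSubXPow R (i + 1) ^ k) := by
  have hmap : (pk k s : R) = coeff s (map (Int.castRingHom R)
      (∏ i ∈ range (s + 1), invOneSubXPow ℤ (i + 1) ^ k)) := by
    rw [coeff_map]
    rfl
  rw [hmap, map_prod]
  simp_rw [map_pow, map_invOneSubXPow _ (Nat.succ_ne_zero _)]
  refine (coeff_prod_of_subset (range_subset_range.mpr hs) fun i hi => ?_).symm
  simp only [mem_sdiff, mem_range] at hi
  exact X_pow_dvd_invOneSubXPow_pow_sub_one i.succ_ne_zero (by omega) k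

theorem cphi_eq_coeff {k t B : ℕ} (ht : t < B) :
    (cphi k t : R) =
      coeff t (mk (fun j => (rQ k j : R)) * ∏ i ∈ range B, invOneSubXPow R (i + 1) ^ k) := by
  rw [coeff_mul, Finset.Nat.sum_antidiagonal_eq_sum_range_succ_mk, cphi]
  push_cast
  exact sum_congr rfl fun j hj => by
    rw [coeff_mk, pk_eq_coeff (B := B) (by simp at hj; omega)]

theorem cphi_two_eq_coeff_expand (h4 : (4 : R) = 0) (t : ℕ) :
    (cphi 2 t : R) =
      coeff t (expand 2 two_ne_zero (∏ i ∈ range (t + 1), invOneSubXPow R (i + 1))) := by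
  have h4' : (4 : R⟦X⟧) = 0 := by rw [← map_ofNat C 4, h4, map_zero]
  set S := squaresSeries R
  set D := divisorSeries R (t + 1)
  set P := expand 2 two_ne_zero (∏ i ∈ range (t + 1), invOneSubXPow R (i + 1))
  have hD : ∏ i ∈ range (t + 1), (1 + 2 * (X ^ (i + 1) * invOneSubXPow R (i + 1))) =
      1 + 2 * D :=
    prod_one_add_two_mul_of_four_eq_zero h4' _ _
  have hprod : (1 + 2 * S) * (P * (1 + 2 * D)) = P * (1 + 2 * (S + D)) := by
    linear_combination (P * S * D) * h4'
  rw [cphi_eq_coeff t.lt_succ_self, mk_rQ_two, prod_range_invOneSubXPow_sq, hD, hprod]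
  refine coeff_mul_of_X_pow_dvd_sub_one P ?_
  rw [add_sub_cancel_left]
  exact (pow_dvd_pow X (t + 1).le_succ).trans
    (X_pow_dvd_two_mul_squaresSeries_add_divisorSeries h4 (t + 1))

theorem cphi_two_eq (h4 : (4 : R) = 0) (t : ℕ) :
    (cphi 2 t : R) = if 2 ∣ t then (Fintype.card (t / 2).Partition : R) else 0 := by
  rw [cphi_two_eq_coeff_expand h4, coeff_expand]
  split_ifs
  · exact coeff_prod_range_invOneSubXPow_eq_card_partition (by omega)
  · rfl

end

/-- `cφ₂(2n) ≡ p(n) (mod 4)` and `cφ₂(2n+1) ≡ 0 (mod 4)`, where `p` is the ordinary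
partition function. -/
theorem cphi_two_mod_four (n : ℕ) :
    (4 : ℤ) ∣ cphi 2 (2 * n) - (Fintype.card (Nat.Partition n) : ℤ) ∧
    (4 : ℤ) ∣ cphi 2 (2 * n + 1) := by
  have key := cphi_two_eq (R := ZMod 4) (by decide)
  constructor
  · refine (ZMod.intCast_eq_intCast_iff_dvd_sub _ _ 4).mp ?_
    rw [key, if_pos (dvd_mul_right 2 n), Nat.mul_div_cancel_left n two_pos]
    simp
  · refine (ZMod.intCast_zmod_eq_zero_iff_dvd _ 4).mp ?_
    rw [key, if_neg (by omega)]
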